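/- arXiv:2102.13487 — 2 statements merged into one kernel-verified Lean document; each statement's English description precedes it below -/
import Mathlib

section
/- State-space realization of the barycentric form: let ξ_1,…,ξ_n ∈ ℂ be distinct, w_1,…,w_n, h_1,…,h_n ∈ ℂ. Set b̂ = (w_1,…,w_n)ᵀ, Ξ = diag(ξ_1,…,ξ_n), Â = Ξ − b̂ eᵀ where e is the all-ones vector, and ĉᵀ = (h_1,…,h_n). Then for every s ∈ ℂ such that sI − Â is invertible and s ≠ ξ_k for all k and 1 + Σ_k w_k/(s−ξ_k) ≠ 0, one has ĉᵀ (sI − Â)⁻¹ b̂ = (Σ_{k=1}^n w_k h_k/(s−ξ_k)) / (1 + Σ_{k=1}^n w_k/(s−ξ_k)). -/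
/-!
Write `s • 1 - Â = diag (s - ξ) + w 1ᵀ` and let `x` solve `(s • 1 - Â) x = w`. Row `i` reads
`(s - ξ i) x i + w i σ = w i` with `σ = ∑ x`, so `x i = (1 - σ) w i / (s - ξ i)`; summing gives
`σ = (1 - σ) S` with `S = ∑ w k / (s - ξ k)`, i.e. `(1 - σ) (1 + S) = 1`. Hence `x` is the vector
`w k / (s - ξ k)` scaled by `(1 + S)⁻¹`, and pairing with `h` yields the barycentric quotient.
-/

open Matrix Finset

section DiagonalAddRankOne

variable {ι K : Type*} [DecidableEq ι] [Field K]

theorem smul_one_sub_diagonal_sub_vecMulVec (s : K) (ξ u v : ι → K) :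
    s • (1 : Matrix ι ι K) - (diagonal ξ - vecMulVec u v) =
      diagonal (fun k => s - ξ k) + vecMulVec u v := by
  rw [sub_sub_eq_add_sub, add_sub_right_comm, smul_one_eq_diagonal, diagonal_sub]

variable [Fintype ι] {d u v x : ι → K}

theorem apply_eq_of_diagonal_add_vecMulVec_mulVec_eq (hd : ∀ k, d k ≠ 0)
    (hx : (diagonal d + vecMulVec u v) *ᵥ x = u) (i : ι) :
    x i = (1 - v ⬝ᵥ x) * (u i / d i) := by
  have row : d i * x i + u i * (v ⬝ᵥ x) = u i := by
    simpa [add_mulVec, mulVec_diagonal, vecMulVec_mulVec, mul_comm] using congrFun hx i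
  field_simp [hd i]
  linear_combination row

theorem one_sub_dotProduct_mul_eq_one_of_diagonal_add_vecMulVec_mulVec_eq (hd : ∀ k, d k ≠ 0)
    (hx : (diagonal d + vecMulVec u v) *ᵥ x = u) :
    (1 - v ⬝ᵥ x) * (1 + ∑ k, v k * (u k / d k)) = 1 := by
  have hsum : v ⬝ᵥ x = (1 - v ⬝ᵥ x) * ∑ k, v k * (u k / d k) := by
    conv_lhs => rw [dotProduct]
    simp_rw [apply_eq_of_diagonal_add_vecMulVec_mulVec_eq hd hx, mul_sum]
    exact sum_congr rfl fun k _ => by ring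
  linear_combination -hsum

theorem eq_smul_of_diagonal_add_vecMulVec_mulVec_eq (hd : ∀ k, d k ≠ 0)
    (hx : (diagonal d + vecMulVec u v) *ᵥ x = u) :
    x = (1 + ∑ k, v k * (u k / d k))⁻¹ • fun k => u k / d k := by
  rw [← eq_inv_of_mul_eq_one_left
    (one_sub_dotProduct_mul_eq_one_of_diagonal_add_vecMulVec_mulVec_eq hd hx)]
  exact funext (apply_eq_of_diagonal_add_vecMulVec_mulVec_eq hd hx)

end DiagonalAddRankOne

theorem barycentric_state_space_general {n : ℕ} (ξ w h : Fin n → ℂ)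
    (A : Matrix (Fin n) (Fin n) ℂ)
    (hA : A = Matrix.diagonal ξ - Matrix.vecMulVec w (fun _ => 1))
    (s : ℂ) (hinv : IsUnit (s • (1 : Matrix (Fin n) (Fin n) ℂ) - A))
    (hs : ∀ k, s ≠ ξ k) :
    h ⬝ᵥ ((s • (1 : Matrix (Fin n) (Fin n) ℂ) - A)⁻¹ *ᵥ w) =
      (∑ k, w k * h k / (s - ξ k)) / (1 + ∑ k, w k / (s - ξ k)) := by
  subst hA
  set M := s • (1 : Matrix (Fin n) (Fin n) ℂ) - (diagonal ξ - vecMulVec w fun _ => 1)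
  have hM : M = diagonal (fun k => s - ξ k) + vecMulVec w fun _ => 1 :=
    smul_one_sub_diagonal_sub_vecMulVec s ξ w _
  have hsolve : (diagonal (fun k => s - ξ k) + vecMulVec w fun _ => 1) *ᵥ (M⁻¹ *ᵥ w) = w := by
    rw [← hM, mulVec_mulVec, mul_nonsing_inv M ((isUnit_iff_isUnit_det M).mp hinv), one_mulVec]
  rw [eq_smul_of_diagonal_add_vecMulVec_mulVec_eq (fun k => sub_ne_zero.mpr (hs k)) hsolve,
    dotProduct_smul, smul_eq_mul, dotProduct, div_eq_inv_mul]
  simp only [one_mul]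
  exact congrArg _ (sum_congr rfl fun k _ => by ring)

/-- State-space realization of the barycentric form. -/
theorem barycentric_state_space {n : ℕ} (hn : 1 ≤ n) (ξ w h : Fin n → ℂ)
    (hξ : Function.Injective ξ)
    (A : Matrix (Fin n) (Fin n) ℂ)
    (hA : A = Matrix.diagonal ξ - Matrix.vecMulVec w (fun _ => 1))
    (s : ℂ) (hinv : IsUnit (s • (1 : Matrix (Fin n) (Fin n) ℂ) - A))
    (hs : ∀ k, s ≠ ξ k)
    (hden : (1 : ℂ) + ∑ k, w k / (s - ξ k) ≠ 0) :
    h ⬝ᵥ ((s • (1 : Matrix (Fin n) (Fin n) ℂ) - A)⁻¹ *ᵥ w) =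
      (∑ k, w k * h k / (s - ξ k)) / (1 + ∑ k, w k / (s - ξ k)) :=
  barycentric_state_space_general ξ w h A hA s hinv hs
end

section
/- State-space realization of the two-variable barycentric form: with Â = diag(ξ_1,…,ξ_n) − b̂ eᵀ, b̂ = (w_1,…,w_n)ᵀ, and K̂ ∈ ℂ^{1×n²} the row vector obtained by vectorizing the matrix M̂ with entries M̂_{i,j} = h_{i,j}, for any s, z such that sI−Â and zI−Â are invertible, s,z ∉ {ξ_1,…,ξ_n}, and both denominators 1+Σ_k w_k/(s−ξ_k) and 1+Σ_ℓ w_ℓ/(z−ξ_ℓ) are nonzero, one has K̂ [ (sI−Â)⁻¹ b̂ ⊗ (zI−Â)⁻¹ b̂ ] = (Σ_{k,ℓ} h_{k,ℓ} w_k w_ℓ /((s−ξ_k)(z−ξ_ℓ))) / ((1+Σ_k w_k/(s−ξ_k))(1+Σ_ℓ w_ℓ/(z−ξ_ℓ))). -/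
/-!
The matrix `s • 1 - Â = diag(s - ξ) + b̂ eᵀ` is a rank-one perturbation of a diagonal matrix, so
by Sherman–Morrison its resolvent maps `b̂` to the barycentric weights
`w_k / (s - ξ_k)` divided by `1 + Σ_k w_k / (s - ξ_k)`. The vector `K̂` paired with a Kronecker
product of two such vectors is the bilinear form `Σ_{k,l} h_{k,l} x_k y_l`, which gives the
two-variable barycentric quotient.
-/

open Matrix Finset

section RankOnePerturbation

variable {ι K : Type*} [Fintype ι] [DecidableEq ι] [Field K]

lemma smul_one_sub_diagonal_sub_vecMulVec_mulVec (ξ w u x : ι → K) (s : K) :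
    (s • (1 : Matrix ι ι K) - (diagonal ξ - vecMulVec w u)) *ᵥ x =
      fun k => (s - ξ k) * x k + w k * (u ⬝ᵥ x) := by
  ext k
  simp only [sub_mulVec, smul_mulVec, one_mulVec, mulVec_diagonal, vecMulVec_mulVec,
    Pi.sub_apply, Pi.smul_apply, smul_eq_mul, MulOpposite.smul_eq_mul_unop,
    MulOpposite.unop_op]
  ring

theorem resolvent_diagonal_sub_vecMulVec_mulVec (ξ w u : ι → K) {s : K}
    (hinv : IsUnit (s • (1 : Matrix ι ι K) - (diagonal ξ - vecMulVec w u)))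
    (hs : ∀ k, s ≠ ξ k) (hd : 1 + ∑ j, u j * (w j / (s - ξ j)) ≠ 0) :
    (s • (1 : Matrix ι ι K) - (diagonal ξ - vecMulVec w u))⁻¹ *ᵥ w =
      fun k => w k / (s - ξ k) / (1 + ∑ j, u j * (w j / (s - ξ j))) := by
  let := hinv.invertible
  set d := 1 + ∑ j, u j * (w j / (s - ξ j)) with hd_def
  refine inv_mulVec_eq_vec ?_
  rw [smul_one_sub_diagonal_sub_vecMulVec_mulVec]
  ext k
  have hsk : s - ξ k ≠ 0 := sub_ne_zero.mpr (hs k)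
  have hux : u ⬝ᵥ (fun j => w j / (s - ξ j) / d) = (d - 1) / d := by
    simp only [dotProduct, hd_def, add_sub_cancel_left, Finset.sum_div, mul_div_assoc]
  rw [hux]
  field_simp
  ring

end RankOnePerturbation

lemma dotProduct_mul_prod {ι κ R : Type*} [Fintype ι] [Fintype κ] [CommSemiring R]
    (K : ι × κ → R) (x : ι → R) (y : κ → R) :
    K ⬝ᵥ (fun q => x q.1 * y q.2) = ∑ k, ∑ l, K (k, l) * x k * y l := by
  simp only [dotProduct, Fintype.sum_prod_type, mul_assoc]

theorem two_variable_state_space_general {n : ℕ}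
    (ξ w : Fin n → ℂ) (h : Fin n → Fin n → ℂ)
    (A : Matrix (Fin n) (Fin n) ℂ)
    (hA : A = Matrix.diagonal ξ - Matrix.vecMulVec w (fun _ => 1))
    (K : Fin n × Fin n → ℂ) (hK : ∀ k l, K (k, l) = h k l)
    (s z : ℂ)
    (hsinv : IsUnit (s • (1 : Matrix (Fin n) (Fin n) ℂ) - A))
    (hzinv : IsUnit (z • (1 : Matrix (Fin n) (Fin n) ℂ) - A))
    (hs : ∀ k, s ≠ ξ k) (hz : ∀ k, z ≠ ξ k)
    (hds : (1 : ℂ) + ∑ k, w k / (s - ξ k) ≠ 0)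
    (hdz : (1 : ℂ) + ∑ l, w l / (z - ξ l) ≠ 0) :
    K ⬝ᵥ (fun q : Fin n × Fin n =>
        ((s • (1 : Matrix (Fin n) (Fin n) ℂ) - A)⁻¹ *ᵥ w) q.1 *
        ((z • (1 : Matrix (Fin n) (Fin n) ℂ) - A)⁻¹ *ᵥ w) q.2) =
      (∑ k, ∑ l, h k l * w k * w l / ((s - ξ k) * (z - ξ l))) /
        ((1 + ∑ k, w k / (s - ξ k)) * (1 + ∑ l, w l / (z - ξ l))) := by
  subst hA
  have hres_s := resolvent_diagonal_sub_vecMulVec_mulVec ξ w _ hsinv hs (by simpa using hds)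
  have hres_z := resolvent_diagonal_sub_vecMulVec_mulVec ξ w _ hzinv hz (by simpa using hdz)
  simp only [one_mul] at hres_s hres_z
  rw [dotProduct_mul_prod, hres_s, hres_z, Finset.sum_div]
  refine Finset.sum_congr rfl fun k _ => ?_
  rw [Finset.sum_div]
  refine Finset.sum_congr rfl fun l _ => ?_
  simp only [hK, div_eq_mul_inv, mul_inv]
  ring

/-- State-space realization of the two-variable barycentric form. -/
theorem two_variable_state_space {n : ℕ} (hn : 1 ≤ n)
    (ξ w : Fin n → ℂ) (h : Fin n → Fin n → ℂ)
    (hξ : Function.Injective ξ)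
    (A : Matrix (Fin n) (Fin n) ℂ)
    (hA : A = Matrix.diagonal ξ - Matrix.vecMulVec w (fun _ => 1))
    (K : Fin n × Fin n → ℂ) (hK : ∀ k l, K (k, l) = h k l)
    (s z : ℂ)
    (hsinv : IsUnit (s • (1 : Matrix (Fin n) (Fin n) ℂ) - A))
    (hzinv : IsUnit (z • (1 : Matrix (Fin n) (Fin n) ℂ) - A))
    (hs : ∀ k, s ≠ ξ k) (hz : ∀ k, z ≠ ξ k)
    (hds : (1 : ℂ) + ∑ k, w k / (s - ξ k) ≠ 0)
    (hdz : (1 : ℂ) + ∑ l, w l / (z - ξ l) ≠ 0) :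
    K ⬝ᵥ (fun q : Fin n × Fin n =>
        ((s • (1 : Matrix (Fin n) (Fin n) ℂ) - A)⁻¹ *ᵥ w) q.1 *
        ((z • (1 : Matrix (Fin n) (Fin n) ℂ) - A)⁻¹ *ᵥ w) q.2) =
      (∑ k, ∑ l, h k l * w k * w l / ((s - ξ k) * (z - ξ l))) /
        ((1 + ∑ k, w k / (s - ξ k)) * (1 + ∑ l, w l / (z - ξ l))) :=
  two_variable_state_space_general ξ w h A hA K hK s z hsinv hzinv hs hz hds hdz
end
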